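/- (Lemma 3.2(ii)) Suppose there exists a Hermitian X_P with R_{X_P} positive definite and X_P ≤ R(X_P). If X_⋆ is Hermitian and there exists a Hermitian X_T with R_{X_T} invertible, ρ(T̂_{X_T}) < 1, and C_{T_{X_T}}(X_⋆) ≥ H_{X_T}, then R_{X_⋆} is positive definite and X_⋆ − R(X_⋆) ≥ K(X_T, X_⋆) ≥ 0; in particular X_⋆ ≥ R(X_⋆). -/

import Mathlib

/-!
Completing the square gives `T_Xᴴ Ȳ T_X + H_X = R(Y) + K(X, Y)` whenever `Y` is Hermitian and
`R_Y` is invertible. Taking `Y = X_P` and `T = T_{X_T}`, this makes `C_T(X_⋆ - X_P) ≥ 0`.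
Applying the conjugate Stein operator twice yields the ordinary Stein operator of `T̂`, and
`ρ(T̂) < 1` forces `T̂ ^ k → 0`, so Stein's lemma gives `X_⋆ ≥ X_P`; hence
`R_{X_⋆} ≥ R_{X_P} > 0`. Taking `Y = X_⋆`, the same identity reads
`X_⋆ - R(X_⋆) - K(X_T, X_⋆) = C_T(X_⋆) - H_{X_T} ≥ 0`.
-/

open Matrix Filter Topology
open scoped ComplexOrder

noncomputable section

namespace CDARE

variable {n m : ℕ}

/-- Entrywise complex conjugate of a matrix. -/
def mconj {p q : ℕ} (M : Matrix (Fin p) (Fin q) ℂ) : Matrix (Fin p) (Fin q) ℂ :=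
  M.map (starRingEnd ℂ)

/-- `hatM M = conj M * M`. -/
def hatM (M : Matrix (Fin n) (Fin n) ℂ) : Matrix (Fin n) (Fin n) ℂ := mconj M * M

/-- `R_X = R + Bᴴ X̄ B`. -/
def RX (R : Matrix (Fin m) (Fin m) ℂ) (B : Matrix (Fin n) (Fin m) ℂ)
    (X : Matrix (Fin n) (Fin n) ℂ) : Matrix (Fin m) (Fin m) ℂ :=
  R + Bᴴ * mconj X * B

/-- `F_X = R_X⁻¹ Bᴴ X̄ A`. -/
def FX (A : Matrix (Fin n) (Fin n) ℂ) (B : Matrix (Fin n) (Fin m) ℂ)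
    (R : Matrix (Fin m) (Fin m) ℂ) (X : Matrix (Fin n) (Fin n) ℂ) :
    Matrix (Fin m) (Fin n) ℂ :=
  (RX R B X)⁻¹ * (Bᴴ * mconj X * A)

/-- `T_X = A - B F_X`. -/
def TX (A : Matrix (Fin n) (Fin n) ℂ) (B : Matrix (Fin n) (Fin m) ℂ)
    (R : Matrix (Fin m) (Fin m) ℂ) (X : Matrix (Fin n) (Fin n) ℂ) :
    Matrix (Fin n) (Fin n) ℂ :=
  A - B * FX A B R X

/-- The Riccati operator `R(X)`. -/
def Rop (A : Matrix (Fin n) (Fin n) ℂ) (B : Matrix (Fin n) (Fin m) ℂ)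
    (R : Matrix (Fin m) (Fin m) ℂ) (H : Matrix (Fin n) (Fin n) ℂ)
    (X : Matrix (Fin n) (Fin n) ℂ) : Matrix (Fin n) (Fin n) ℂ :=
  Aᴴ * mconj X * A - Aᴴ * mconj X * B * (RX R B X)⁻¹ * (Bᴴ * mconj X * A) + H

/-- `H_X = H + F_Xᴴ R F_X`. -/
def HX (A : Matrix (Fin n) (Fin n) ℂ) (B : Matrix (Fin n) (Fin m) ℂ)
    (R : Matrix (Fin m) (Fin m) ℂ) (H : Matrix (Fin n) (Fin n) ℂ)
    (X : Matrix (Fin n) (Fin n) ℂ) : Matrix (Fin n) (Fin n) ℂ :=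
  H + (FX A B R X)ᴴ * R * FX A B R X

/-- `K(Y, X) = (F_Y - F_X)ᴴ R_X (F_Y - F_X)`. -/
def Kop (A : Matrix (Fin n) (Fin n) ℂ) (B : Matrix (Fin n) (Fin m) ℂ)
    (R : Matrix (Fin m) (Fin m) ℂ) (Y X : Matrix (Fin n) (Fin n) ℂ) :
    Matrix (Fin n) (Fin n) ℂ :=
  (FX A B R Y - FX A B R X)ᴴ * RX R B X * (FX A B R Y - FX A B R X)

/-- Conjugate Stein operator `C_C(X) = X - Cᴴ X̄ C`. -/
def CStein (C X : Matrix (Fin n) (Fin n) ℂ) : Matrix (Fin n) (Fin n) ℂ :=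
  X - Cᴴ * mconj X * C

/-- The set `S_≥`. -/
def Sge (A : Matrix (Fin n) (Fin n) ℂ) (B : Matrix (Fin n) (Fin m) ℂ)
    (R : Matrix (Fin m) (Fin m) ℂ) (H : Matrix (Fin n) (Fin n) ℂ) :
    Set (Matrix (Fin n) (Fin n) ℂ) :=
  {X | X.IsHermitian ∧ ∃ XT : Matrix (Fin n) (Fin n) ℂ, XT.IsHermitian ∧
      IsUnit (RX R B XT) ∧ spectralRadius ℂ (hatM (TX A B R XT)) < 1 ∧
      (CStein (TX A B R XT) X - HX A B R H XT).PosSemidef}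

end CDARE

theorem tendsto_pow_atTop_nhds_zero_of_spectralRadius_lt_one {A : Type*} [NormedRing A]
    [NormedAlgebra ℂ A] [CompleteSpace A] {a : A} (h : spectralRadius ℂ a < 1) :
    Tendsto (a ^ ·) atTop (𝓝 0) := by
  obtain ⟨r, hρr, hr1⟩ := exists_between h
  have hr : r ≠ ⊤ := (hr1.trans ENNReal.one_lt_top).ne
  have hr1' : r.toReal < 1 := by
    simpa using (ENNReal.toReal_lt_toReal hr ENNReal.one_ne_top).2 hr1
  refine squeeze_zero_norm' ?_ (tendsto_pow_atTop_nhds_zero_of_lt_one ENNReal.toReal_nonneg hr1')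
  filter_upwards [(spectrum.pow_norm_pow_one_div_tendsto_nhds_spectralRadius a).eventually_lt_const
    hρr, eventually_ne_atTop 0] with k hk hk0
  have hroot : ‖a ^ k‖ ^ (1 / k : ℝ) < r.toReal :=
    (ENNReal.ofReal_lt_iff_lt_toReal (by positivity) hr).1 hk
  calc ‖a ^ k‖ = (‖a ^ k‖ ^ (1 / k : ℝ)) ^ k := by
        rw [← Real.rpow_natCast, ← Real.rpow_mul (norm_nonneg _),
          one_div_mul_cancel (by exact_mod_cast hk0), Real.rpow_one]
    _ ≤ r.toReal ^ k := pow_le_pow_left₀ (by positivity) hroot.le k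

namespace Matrix

variable {ι 𝕜 : Type*} [Fintype ι] [RCLike 𝕜]

section

attribute [local instance] Matrix.linftyOpNormedAddCommGroup Matrix.linftyOpNormedRing
  Matrix.linftyOpNormedAlgebra

theorem tendsto_pow_atTop_nhds_zero_of_spectralRadius_lt_one [DecidableEq ι] {M : Matrix ι ι ℂ}
    (h : spectralRadius ℂ M < 1) : Tendsto (M ^ ·) atTop (𝓝 0) :=
  have := FiniteDimensional.complete ℂ (Matrix ι ι ℂ)
  _root_.tendsto_pow_atTop_nhds_zero_of_spectralRadius_lt_one h

end

theorem isClosed_setOf_posSemidef : IsClosed {W : Matrix ι ι 𝕜 | W.PosSemidef} := by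
  have hset : {W : Matrix ι ι 𝕜 | W.PosSemidef} =
      {W | Wᴴ = W} ∩ ⋂ x : ι → 𝕜, {W | 0 ≤ star x ⬝ᵥ (W *ᵥ x)} := by
    ext W
    simp [posSemidef_iff_dotProduct_mulVec, IsHermitian]
  rw [hset]
  exact (isClosed_eq continuous_id.matrix_conjTranspose continuous_id).inter
    (isClosed_iInter fun x => isClosed_le continuous_const
      (continuous_const.dotProduct (continuous_id.matrix_mulVec continuous_const)))

theorem PosSemidef.sub_conjTranspose_pow_mul_mul_pow [DecidableEq ι] {M W : Matrix ι ι 𝕜}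
    (h : (W - Mᴴ * W * M).PosSemidef) (k : ℕ) : (W - (M ^ k)ᴴ * W * M ^ k).PosSemidef := by
  induction k with
  | zero => simpa using PosSemidef.zero
  | succ k ih =>
    have hsplit : W - (M ^ (k + 1))ᴴ * W * M ^ (k + 1) =
        (W - Mᴴ * W * M) + Mᴴ * (W - (M ^ k)ᴴ * W * M ^ k) * M := by
      simp only [pow_succ, conjTranspose_mul, Matrix.mul_sub, Matrix.sub_mul, Matrix.mul_assoc]
      abel
    rw [hsplit]
    exact h.add (ih.conjTranspose_mul_mul_same M)

theorem posSemidef_of_posSemidef_sub_conjTranspose_mul_mul [DecidableEq ι] {M W : Matrix ι ι 𝕜}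
    (hM : Tendsto (M ^ ·) atTop (𝓝 0)) (h : (W - Mᴴ * W * M).PosSemidef) : W.PosSemidef := by
  have hcont : Continuous fun P : Matrix ι ι 𝕜 => W - Pᴴ * W * P := by fun_prop
  have hlim : Tendsto (fun k => W - (M ^ k)ᴴ * W * M ^ k) atTop (𝓝 W) := by
    simpa only [Function.comp_def, conjTranspose_zero, Matrix.mul_zero, sub_zero] using
      (hcont.tendsto 0).comp hM
  exact isClosed_setOf_posSemidef.mem_of_tendsto hlim
    (Eventually.of_forall h.sub_conjTranspose_pow_mul_mul_pow)

end Matrix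

namespace CDARE

variable {n m : ℕ}

section Conj

variable {p q : ℕ}

lemma mconj_sub (M N : Matrix (Fin p) (Fin q) ℂ) : mconj (M - N) = mconj M - mconj N :=
  Matrix.map_sub _ (map_sub _) M N

lemma mconj_mul {r : ℕ} (M : Matrix (Fin p) (Fin q) ℂ) (N : Matrix (Fin q) (Fin r) ℂ) :
    mconj (M * N) = mconj M * mconj N :=
  Matrix.map_mul

@[simp]
lemma mconj_mconj (M : Matrix (Fin p) (Fin q) ℂ) : mconj (mconj M) = M := by
  ext i j
  simp [mconj]

lemma mconj_conjTranspose (M : Matrix (Fin p) (Fin q) ℂ) : mconj Mᴴ = Mᵀ := by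
  ext i j
  simp [mconj]

lemma conjTranspose_mconj (M : Matrix (Fin p) (Fin q) ℂ) : (mconj M)ᴴ = Mᵀ := by
  ext i j
  simp [mconj]

lemma mconj_eq_transpose {X : Matrix (Fin p) (Fin p) ℂ} (hX : X.IsHermitian) :
    mconj X = Xᵀ := by
  rw [← mconj_conjTranspose, hX.eq]

lemma isHermitian_mconj {X : Matrix (Fin p) (Fin p) ℂ} (hX : X.IsHermitian) :
    (mconj X).IsHermitian := by
  rw [IsHermitian, conjTranspose_mconj, mconj_eq_transpose hX]

lemma posSemidef_mconj {X : Matrix (Fin p) (Fin p) ℂ} (hX : X.PosSemidef) :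
    (mconj X).PosSemidef := by
  rw [mconj_eq_transpose hX.isHermitian]
  exact hX.transpose

end Conj

lemma CStein_sub (C X Y : Matrix (Fin n) (Fin n) ℂ) :
    CStein C (X - Y) = CStein C X - CStein C Y := by
  simp only [CStein, mconj_sub, Matrix.mul_sub, Matrix.sub_mul]
  abel

lemma sub_hatM_eq_CStein_add (T W : Matrix (Fin n) (Fin n) ℂ) :
    W - (hatM T)ᴴ * W * hatM T = CStein T W + Tᴴ * mconj (CStein T W) * T := by
  simp only [CStein, hatM, mconj_sub, mconj_mul, mconj_mconj, mconj_conjTranspose,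
    conjTranspose_mul, conjTranspose_mconj, Matrix.mul_sub, Matrix.sub_mul, Matrix.mul_assoc]
  abel

lemma posSemidef_of_CStein {T W : Matrix (Fin n) (Fin n) ℂ}
    (hρ : spectralRadius ℂ (hatM T) < 1) (h : (CStein T W).PosSemidef) : W.PosSemidef := by
  refine Matrix.posSemidef_of_posSemidef_sub_conjTranspose_mul_mul
    (Matrix.tendsto_pow_atTop_nhds_zero_of_spectralRadius_lt_one hρ) ?_
  rw [sub_hatM_eq_CStein_add]
  exact h.add ((posSemidef_mconj h).conjTranspose_mul_mul_same T)

section Riccati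

variable {A : Matrix (Fin n) (Fin n) ℂ} {B : Matrix (Fin n) (Fin m) ℂ}
  {R : Matrix (Fin m) (Fin m) ℂ} {H X Y : Matrix (Fin n) (Fin n) ℂ}

lemma isHermitian_RX (hR : R.IsHermitian) (hX : X.IsHermitian) : (RX R B X).IsHermitian :=
  hR.add (isHermitian_conjTranspose_mul_mul B (isHermitian_mconj hX))

lemma RX_sub_RX (X Y : Matrix (Fin n) (Fin n) ℂ) :
    RX R B X - RX R B Y = Bᴴ * mconj (X - Y) * B := by
  simp only [RX, mconj_sub, Matrix.mul_sub, Matrix.sub_mul]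
  abel

lemma posDef_RX_of_posSemidef_sub (hY : (RX R B Y).PosDef) (hXY : (X - Y).PosSemidef) :
    (RX R B X).PosDef := by
  rw [← add_sub_cancel (RX R B Y) (RX R B X), RX_sub_RX]
  exact hY.add_posSemidef ((posSemidef_mconj hXY).conjTranspose_mul_mul_same B)

lemma posSemidef_Kop (hY : (RX R B Y).PosSemidef) : (Kop A B R X Y).PosSemidef :=
  hY.conjTranspose_mul_mul_same _

lemma conjTranspose_TX_mul_mul_TX_add_HX (hR : R.IsHermitian) (hY : Y.IsHermitian)
    (hRY : IsUnit (RX R B Y)) :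
    (TX A B R X)ᴴ * mconj Y * TX A B R X + HX A B R H X =
      Rop A B R H Y + Kop A B R X Y := by
  have hdet : IsUnit (RX R B Y).det := (isUnit_iff_isUnit_det _).1 hRY
  have hF : Bᴴ * (mconj Y * A) = RX R B Y * FX A B R Y := by
    rw [FX, ← Matrix.mul_assoc (RX R B Y), Matrix.mul_nonsing_inv _ hdet, Matrix.one_mul,
      Matrix.mul_assoc]
  have hFH (Z : Matrix (Fin m) (Fin n) ℂ) :
      Aᴴ * (mconj Y * (B * Z)) = (FX A B R Y)ᴴ * (RX R B Y * Z) := by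
    have := congrArg conjTranspose hF
    simp only [conjTranspose_mul, conjTranspose_conjTranspose, (isHermitian_mconj hY).eq,
      (isHermitian_RX hR hY).eq, Matrix.mul_assoc] at this
    simp only [← Matrix.mul_assoc, this]
  have hBB (Z : Matrix (Fin m) (Fin n) ℂ) :
      Bᴴ * (mconj Y * (B * Z)) = RX R B Y * Z - R * Z := by
    simp only [RX, Matrix.add_mul, Matrix.mul_assoc]
    abel
  have hcancel (Z : Matrix (Fin m) (Fin n) ℂ) : (RX R B Y)⁻¹ * (RX R B Y * Z) = Z := by
    rw [← Matrix.mul_assoc, Matrix.nonsing_inv_mul _ hdet, Matrix.one_mul]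
  simp only [Rop, HX, TX, Kop, conjTranspose_sub, conjTranspose_mul, Matrix.sub_mul,
    Matrix.mul_sub, Matrix.mul_assoc, hF, hFH, hBB, hcancel]
  abel

lemma CStein_TX_sub_HX (hR : R.IsHermitian) (hY : Y.IsHermitian) (hRY : IsUnit (RX R B Y)) :
    CStein (TX A B R X) Y - HX A B R H X = Y - Rop A B R H Y - Kop A B R X Y := by
  rw [CStein, sub_sub, conjTranspose_TX_mul_mul_TX_add_HX hR hY hRY, sub_add_eq_sub_sub]

end Riccati

theorem lemma_3_2_ii_general (n m : ℕ) (A : Matrix (Fin n) (Fin n) ℂ) (B : Matrix (Fin n) (Fin m) ℂ)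
    (R : Matrix (Fin m) (Fin m) ℂ) (H : Matrix (Fin n) (Fin n) ℂ)
    (hR : R.IsHermitian)
    (hP : ∃ XP : Matrix (Fin n) (Fin n) ℂ, XP.IsHermitian ∧ (RX R B XP).PosDef ∧
      (Rop A B R H XP - XP).PosSemidef)
    (Xstar : Matrix (Fin n) (Fin n) ℂ) (hXstar : Xstar.IsHermitian)
    (XT : Matrix (Fin n) (Fin n) ℂ)
    (hρT : spectralRadius ℂ (hatM (TX A B R XT)) < 1)
    (hineq : (CStein (TX A B R XT) Xstar - HX A B R H XT).PosSemidef) :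
    (RX R B Xstar).PosDef ∧
    (Xstar - Rop A B R H Xstar - Kop A B R XT Xstar).PosSemidef ∧
    (Kop A B R XT Xstar).PosSemidef ∧
    (Xstar - Rop A B R H Xstar).PosSemidef := by
  obtain ⟨XP, hXP, hRXP, hXP_sub⟩ := hP
  have hXP_le_Xstar : (Xstar - XP).PosSemidef := by
    refine posSemidef_of_CStein hρT ?_
    have hXP_eq := CStein_TX_sub_HX (A := A) (H := H) (X := XT) hR hXP hRXP.isUnit
    have hsplit : CStein (TX A B R XT) (Xstar - XP) =
        (CStein (TX A B R XT) Xstar - HX A B R H XT) +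
          ((Rop A B R H XP - XP) + Kop A B R XT XP) := by
      rw [CStein_sub, ← sub_sub_sub_cancel_right _ _ (HX A B R H XT), hXP_eq]
      abel
    rw [hsplit]
    exact hineq.add (hXP_sub.add (posSemidef_Kop hRXP.posSemidef))
  have hRXstar : (RX R B Xstar).PosDef := posDef_RX_of_posSemidef_sub hRXP hXP_le_Xstar
  have hgap : (Xstar - Rop A B R H Xstar - Kop A B R XT Xstar).PosSemidef := by
    rwa [← CStein_TX_sub_HX hR hXstar hRXstar.isUnit]
  have hK : (Kop A B R XT Xstar).PosSemidef := posSemidef_Kop hRXstar.posSemidef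
  refine ⟨hRXstar, hgap, hK, ?_⟩
  simpa only [sub_add_cancel] using hgap.add hK

/-- Lemma 3.2(ii): if `R_≤ ∩ ℙ ≠ ∅`, then any `X_⋆ ∈ S_≥` has `R_{X_⋆}` positive definite and
`X_⋆ - R(X_⋆) ≥ K(X_T, X_⋆) ≥ 0`; in particular `X_⋆ ≥ R(X_⋆)`. -/
theorem lemma_3_2_ii (n m : ℕ) (A : Matrix (Fin n) (Fin n) ℂ) (B : Matrix (Fin n) (Fin m) ℂ)
    (R : Matrix (Fin m) (Fin m) ℂ) (H : Matrix (Fin n) (Fin n) ℂ)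
    (hR : R.IsHermitian) (hRunit : IsUnit R) (hH : H.IsHermitian)
    (hP : ∃ XP : Matrix (Fin n) (Fin n) ℂ, XP.IsHermitian ∧ (RX R B XP).PosDef ∧
      (Rop A B R H XP - XP).PosSemidef)
    (Xstar : Matrix (Fin n) (Fin n) ℂ) (hXstar : Xstar.IsHermitian)
    (XT : Matrix (Fin n) (Fin n) ℂ) (hXT : XT.IsHermitian) (hRXT : IsUnit (RX R B XT))
    (hρT : spectralRadius ℂ (hatM (TX A B R XT)) < 1)
    (hineq : (CStein (TX A B R XT) Xstar - HX A B R H XT).PosSemidef) :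
    (RX R B Xstar).PosDef ∧
    (Xstar - Rop A B R H Xstar - Kop A B R XT Xstar).PosSemidef ∧
    (Kop A B R XT Xstar).PosSemidef ∧
    (Xstar - Rop A B R H Xstar).PosSemidef :=
  lemma_3_2_ii_general n m A B R H hR hP Xstar hXstar XT hρT hineq

end CDARE
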